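/- Let σ_1, σ_2, σ_3 be the Pauli matrices and λ_1, λ_2, λ_3 ∈ ℝ. Define the linear map ℰ : M_2(ℂ) → M_2(ℂ) by ℰ(w_0 I + w_1 σ_1 + w_2 σ_2 + w_3 σ_3) = w_0 I + λ_1 w_1 σ_1 + λ_2 w_2 σ_2 + λ_3 w_3 σ_3. Then ℰ is completely positive if and only if 1 + λ_3 ≥ |λ_1 + λ_2| and 1 − λ_3 ≥ |λ_1 − λ_2|. -/

import Mathlib

open Matrix BigOperators
open scoped Kronecker ComplexOrder

noncomputable def σ₁ : Matrix (Fin 2) (Fin 2) ℂ := !![0, 1; 1, 0]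
noncomputable def σ₂ : Matrix (Fin 2) (Fin 2) ℂ := !![0, -Complex.I; Complex.I, 0]
noncomputable def σ₃ : Matrix (Fin 2) (Fin 2) ℂ := !![1, 0; 0, -1]

/-- The Choi matrix of a map Φ : M_2(ℂ) → M_2(ℂ). -/
noncomputable def choiMatrix
    (Φ : Matrix (Fin 2) (Fin 2) ℂ → Matrix (Fin 2) (Fin 2) ℂ) :
    Matrix (Fin 2 × Fin 2) (Fin 2 × Fin 2) ℂ :=
  ∑ i : Fin 2, ∑ j : Fin 2,
    Φ (Matrix.single i j (1 : ℂ)) ⊗ₖ Matrix.single i j (1 : ℂ)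

/-- Complete positivity via Choi's theorem. -/
noncomputable def IsCompletelyPositive
    (Φ : Matrix (Fin 2) (Fin 2) ℂ → Matrix (Fin 2) (Fin 2) ℂ) : Prop :=
  (choiMatrix Φ).PosSemidef

/-!
Expanding a matrix in the basis `1, σ₁, σ₂, σ₃` gives `ℰ` explicitly. Its Choi matrix, with
`Fin 2 × Fin 2` ordered lexicographically, is X-shaped, and the unnormalised Bell vectors
`e₀₀ ± e₁₁`, `e₀₁ ± e₁₀` diagonalise it with eigenvalues `(1 + λ₃ ± (λ₁ + λ₂)) / 4` and
`(1 - λ₃ ± (λ₁ - λ₂)) / 4`; their nonnegativity is the stated condition.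
-/

lemma choiMatrix_apply (Φ : Matrix (Fin 2) (Fin 2) ℂ → Matrix (Fin 2) (Fin 2) ℂ)
    (a b c d : Fin 2) : choiMatrix Φ (a, b) (c, d) = Φ (single b d 1) a c := by
  fin_cases b <;> fin_cases d <;> simp [choiMatrix, Matrix.sum_apply, single_apply]

lemma pauli_expansion (A : Matrix (Fin 2) (Fin 2) ℂ) :
    A = ((A 0 0 + A 1 1) / 2) • (1 : Matrix (Fin 2) (Fin 2) ℂ) + ((A 0 1 + A 1 0) / 2) • σ₁
      + (Complex.I * (A 0 1 - A 1 0) / 2) • σ₂ + ((A 0 0 - A 1 1) / 2) • σ₃ := by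
  ext i j
  fin_cases i <;> fin_cases j <;> simp [σ₁, σ₂, σ₃] <;> grind [Complex.I_sq]

section PauliChannel

variable {l₁ l₂ l₃ : ℝ} {ℰ : Matrix (Fin 2) (Fin 2) ℂ →ₗ[ℂ] Matrix (Fin 2) (Fin 2) ℂ}
  (h0 : ℰ 1 = 1) (h1 : ℰ σ₁ = (l₁ : ℂ) • σ₁) (h2 : ℰ σ₂ = (l₂ : ℂ) • σ₂)
  (h3 : ℰ σ₃ = (l₃ : ℂ) • σ₃)
include h0 h1 h2 h3

lemma pauliChannel_apply (A : Matrix (Fin 2) (Fin 2) ℂ) :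
    ℰ A = (1 / 2 : ℂ) •
      !![(1 + l₃) * A 0 0 + (1 - l₃) * A 1 1, (l₁ + l₂) * A 0 1 + (l₁ - l₂) * A 1 0;
        (l₁ - l₂) * A 0 1 + (l₁ + l₂) * A 1 0, (1 - l₃) * A 0 0 + (1 + l₃) * A 1 1] := by
  conv_lhs => rw [pauli_expansion A]
  simp only [map_add, map_smul, h0, h1, h2, h3, smul_smul]
  ext i j
  fin_cases i <;> fin_cases j <;> simp [σ₁, σ₂, σ₃] <;> grind [Complex.I_sq]

lemma choiMatrix_pauliChannel_submatrix :
    (choiMatrix ℰ).submatrix finProdFinEquiv.symm finProdFinEquiv.symm =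
      !![(((1 + l₃) / 2 : ℝ) : ℂ), 0, 0, ((l₁ + l₂) / 2 : ℝ);
        0, ((1 - l₃) / 2 : ℝ), ((l₁ - l₂) / 2 : ℝ), 0;
        0, ((l₁ - l₂) / 2 : ℝ), ((1 - l₃) / 2 : ℝ), 0;
        ((l₁ + l₂) / 2 : ℝ), 0, 0, ((1 + l₃) / 2 : ℝ)] := by
  ext i j
  fin_cases i <;> fin_cases j <;>
    simp [choiMatrix_apply, pauliChannel_apply h0 h1 h2 h3, finProdFinEquiv, Fin.divNat,
      Fin.modNat] <;> ring

end PauliChannel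

/-- Its columns are the unnormalised Bell vectors `e₀₀ + e₁₁, e₀₀ - e₁₁, e₀₁ + e₁₀, e₀₁ - e₁₀`,
in the lexicographic order of `finProdFinEquiv`. -/
def bellMatrix : Matrix (Fin 4) (Fin 4) ℂ :=
  !![1, 1, 0, 0; 0, 0, 1, 1; 0, 0, 1, -1; 1, -1, 0, 0]

lemma star_bellMatrix_mul_bellMatrix : star bellMatrix * bellMatrix = (2 : ℂ) • 1 := by
  ext i j
  fin_cases i <;> fin_cases j <;>
    simp [bellMatrix, Matrix.mul_apply, Fin.sum_univ_four] <;> norm_num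

lemma isUnit_bellMatrix : IsUnit bellMatrix := by
  rw [isUnit_iff_isUnit_det]
  refine isUnit_det_of_left_inverse (B := (1 / 2 : ℂ) • star bellMatrix) ?_
  rw [smul_mul_assoc, star_bellMatrix_mul_bellMatrix, smul_smul]
  norm_num

lemma xShaped_eq_bellMatrix_mul_diagonal (a b c d : ℝ) :
    !![(a : ℂ), 0, 0, b; 0, c, d, 0; 0, d, c, 0; b, 0, 0, a] =
      bellMatrix *
        diagonal (fun k ↦ (![(a + b) / 2, (a - b) / 2, (c + d) / 2, (c - d) / 2] k : ℂ)) *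
        star bellMatrix := by
  ext i j
  fin_cases i <;> fin_cases j <;>
    simp [bellMatrix, Matrix.mul_apply, Fin.sum_univ_four, vecMul_diagonal] <;> ring

lemma posSemidef_xShaped_iff (a b c d : ℝ) :
    (!![(a : ℂ), 0, 0, b; 0, c, d, 0; 0, d, c, 0; b, 0, 0, a]).PosSemidef ↔
      |b| ≤ a ∧ |d| ≤ c := by
  rw [xShaped_eq_bellMatrix_mul_diagonal, isUnit_bellMatrix.posSemidef_star_right_conjugate_iff,
    posSemidef_diagonal_iff]
  simp [Complex.zero_le_real, Fin.forall_fin_succ, abs_le]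
  grind

/-- The qubit Pauli channel ℰ (fixing I and scaling σ_k by λ_k) is completely
positive iff 1 + λ₃ ≥ |λ₁ + λ₂| and 1 − λ₃ ≥ |λ₁ − λ₂|. -/
theorem pauliChannel_completelyPositive_iff (l₁ l₂ l₃ : ℝ)
    (ℰ : Matrix (Fin 2) (Fin 2) ℂ →ₗ[ℂ] Matrix (Fin 2) (Fin 2) ℂ)
    (h0 : ℰ 1 = 1)
    (h1 : ℰ σ₁ = (l₁ : ℂ) • σ₁)
    (h2 : ℰ σ₂ = (l₂ : ℂ) • σ₂)
    (h3 : ℰ σ₃ = (l₃ : ℂ) • σ₃) :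
    IsCompletelyPositive ℰ ↔ (|l₁ + l₂| ≤ 1 + l₃ ∧ |l₁ - l₂| ≤ 1 - l₃) := by
  rw [IsCompletelyPositive, ← posSemidef_submatrix_equiv finProdFinEquiv.symm,
    choiMatrix_pauliChannel_submatrix h0 h1 h2 h3, posSemidef_xShaped_iff]
  simp only [abs_div, abs_two, div_le_div_iff_of_pos_right (two_pos : (0 : ℝ) < 2)]
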